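/- arXiv:1507.02137 — 5 statements merged into one kernel-verified Lean document; each statement's English description precedes it below -/
import Mathlib

section
/- If B is a left brace with additive group A, then H := {(a, λ_a) : a ∈ B} is a regular subgroup of Hol(A) = A ⋊ Aut(A); that is, H is a subgroup and for every w ∈ A there exists a unique element (v, M) ∈ H with v + M(w) = 0. -/
instance AddAut.group (A : Type*) [Add A] : Group (AddAut A) where
  mul g h := AddEquiv.trans h g
  one := AddEquiv.refl _
  inv := AddEquiv.symm
  mul_assoc _ _ _ := rfl
  one_mul _ := rfl
  mul_one _ := rfl
  inv_mul_cancel := AddEquiv.self_trans_symm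

def holAction (A : Type*) [AddCommGroup A] : AddAut A →* MulAut (Multiplicative A) where
  toFun f := AddEquiv.toMultiplicative f
  map_one' := rfl
  map_mul' _ _ := rfl

/-- The holomorph `Hol(A) = A ⋊ Aut(A)` of an additive abelian group `A`. -/
abbrev Hol (A : Type*) [AddCommGroup A] :=
  SemidirectProduct (Multiplicative A) (AddAut A) (holAction A)

/-! The identity `a + λ_a(b) = a · b` says exactly that `a ↦ (a, λ_a)` is a group homomorphism
`B → Hol(B)`, so `H` is its image. Moreover `(a, λ_a)` sends `w` to `a · w`, and `0` is the
identity of `(B, ·)` (as `λ_1(0) = 0` gives `1 · 0 - 1 = 0`), so only `a = w⁻¹` sends `w` to `0`. -/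

namespace Brace

variable {B : Type*} [AddCommGroup B] [Group B] {lam : B →* AddAut B}

theorem add_lam_apply (hlam : ∀ g h : B, lam g h = g * h - g) (a b : B) :
    a + lam a b = a * b := by
  rw [hlam]
  abel

theorem zero_eq_one (hlam : ∀ g h : B, lam g h = g * h - g) : (0 : B) = 1 := by
  have h := hlam 1 0
  rwa [map_zero, eq_comm, sub_eq_zero, one_mul] at h

variable (lam) in
def toHol (hlam : ∀ g h : B, lam g h = g * h - g) : B →* Hol B where
  toFun a := ⟨Multiplicative.ofAdd a, lam a⟩
  map_one' := SemidirectProduct.ext (congrArg Multiplicative.ofAdd (zero_eq_one hlam).symm)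
    lam.map_one
  map_mul' a b := SemidirectProduct.ext
    (congrArg Multiplicative.ofAdd (add_lam_apply hlam a b).symm) (lam.map_mul a b)

theorem add_lam_eq_zero_iff (hlam : ∀ g h : B, lam g h = g * h - g) (a w : B) :
    a + lam a w = 0 ↔ a = w⁻¹ := by
  rw [add_lam_apply hlam, zero_eq_one hlam, mul_eq_one_iff_eq_inv]

end Brace

open Brace in
theorem stmt2_general (B : Type*) [AddCommGroup B] [Group B]
    (lam : B →* AddAut B) (hlam : ∀ g h : B, lam g h = g * h - g) :
    ∃ H : Subgroup (Hol B),
      (∀ x : Hol B, x ∈ H ↔ ∃ a : B, x = ⟨Multiplicative.ofAdd a, lam a⟩) ∧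
      ∀ w : B, ∃! x : Hol B, x ∈ H ∧ Multiplicative.toAdd x.left + x.right w = 0 := by
  refine ⟨(toHol lam hlam).range, fun x => by simp [toHol, eq_comm], fun w => ?_⟩
  refine ⟨toHol lam hlam w⁻¹, ⟨⟨w⁻¹, rfl⟩, (add_lam_eq_zero_iff hlam _ w).mpr rfl⟩, ?_⟩
  rintro _ ⟨⟨a, rfl⟩, hzero⟩
  rw [(add_lam_eq_zero_iff hlam a w).mp hzero]

/-- If `B` is a left brace with additive group `A = (B,+)`, then
`H = {(a, λ_a) : a ∈ B}` is a regular subgroup of `Hol(A)`: it is a subgroup, and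
for every `w ∈ A` there is a unique `(v, M) ∈ H` with `v + M(w) = 0`. -/
theorem stmt2 (B : Type*) [AddCommGroup B] [Group B]
    (brace : ∀ a b c : B, a * (b + c) + a = a * b + a * c)
    (lam : B →* AddAut B) (hlam : ∀ g h : B, lam g h = g * h - g) :
    ∃ H : Subgroup (Hol B),
      (∀ x : Hol B, x ∈ H ↔ ∃ a : B, x = ⟨Multiplicative.ofAdd a, lam a⟩) ∧
      ∀ w : B, ∃! x : Hol B, x ∈ H ∧ Multiplicative.toAdd x.left + x.right w = 0 :=
  stmt2_general B lam hlam
end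

section
/- Let p be a prime and m a positive integer with m + 1 ≤ p. If B is a finite left brace whose additive group is isomorphic to (Z/pZ)^m, then every nonidentity element of the multiplicative group (B,·) has order p. -/
open Polynomial Finset

/-- Let `p` be a prime and `m ≥ 1` with `m + 1 ≤ p`. If `B` is a finite left
brace whose additive group is isomorphic to `(Z/pZ)^m`, then every nonidentity element of
the multiplicative group `(B,·)` has order `p`. -/
theorem stmt6 (p m : ℕ) (hp : p.Prime) (hm0 : 0 < m) (hm : m + 1 ≤ p)
    (B : Type*) [AddCommGroup B] [Group B] [Fintype B]
    (brace : ∀ a b c : B, a * (b + c) + a = a * b + a * c)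
    (hadd : Nonempty (B ≃+ (Fin m → ZMod p))) :
    ∀ x : B, x ≠ 1 → orderOf x = p := by
  haveI : Fact p.Prime := ⟨hp⟩
  obtain ⟨e⟩ := hadd
  -- basic brace consequences
  have hmul0 : ∀ a : B, a * 0 = a := by
    intro a
    have h := brace a 0 0
    rw [add_zero] at h
    exact (add_left_cancel h).symm
  have h01 : (0 : B) = 1 := by
    have h1 : (1 : B) * 0 = 1 := hmul0 1
    rwa [one_mul] at h1
  have hmul_add : ∀ a b c : B, a * (b + c) = a * b + a * c - a := by
    intro a b c
    rw [eq_sub_iff_add_eq]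
    exact brace a b c
  have hmul_sub : ∀ a b c : B, a * (b - c) = a * b - a * c + a := by
    intro a b c
    have h := hmul_add a (b - c) c
    rw [sub_add_cancel] at h
    rw [h]
    abel
  -- the lambda maps as linear endomorphisms of V := Fin m → ZMod p
  set V := (Fin m → ZMod p)
  set F : B → Module.End (ZMod p) V := fun x =>
    AddMonoidHom.toZModLinearMap p
      (AddMonoidHom.mk' (fun v => e (x * e.symm v - x)) (by
        intro u v
        show e (x * e.symm (u + v) - x) = e (x * e.symm u - x) + e (x * e.symm v - x)
        rw [← map_add e]
        congr 1
        rw [map_add e.symm, hmul_add]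
        abel)) with hFdef
  have hF : ∀ (x : B) (v : V), F x v = e (x * e.symm v - x) := fun _ _ => rfl
  have hFpow : ∀ (x : B) (n : ℕ) (v : V), ((F x) ^ n) v = e (x ^ n * e.symm v - x ^ n) := by
    intro x n
    induction n with
    | zero =>
      intro v
      rw [pow_zero, Module.End.one_apply, pow_zero, one_mul, ← h01, sub_zero, AddEquiv.apply_symm_apply]
    | succ n ih =>
      intro v
      rw [pow_succ', Module.End.mul_apply, ih, hF, AddEquiv.symm_apply_apply, hmul_sub,
        ← mul_assoc, ← pow_succ']
      congr 1
      abel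
  -- cardinality
  have hcard : Fintype.card B = p ^ m := by
    rw [Fintype.card_congr e.toEquiv]
    simp [ZMod.card]
  -- F x is annihilated by (X-1)^(p^m)
  intro x hx
  have hxpm : x ^ (p ^ m) = 1 := by
    rw [← hcard]
    exact pow_card_eq_one
  have hFpm : (F x) ^ (p ^ m) = 1 := by
    refine LinearMap.ext fun v => ?_
    rw [hFpow, hxpm, one_mul, Module.End.one_apply, ← h01, sub_zero, AddEquiv.apply_symm_apply]
  have hann : (Polynomial.aeval (F x)) ((X - 1 : (ZMod p)[X]) ^ (p ^ m)) = 0 := by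
    rw [sub_pow_char_pow, one_pow, map_sub, map_pow, aeval_X, map_one, hFpm, sub_self]
  -- minimal polynomial is (X-1)^k with k ≤ m
  have hμdvd : minpoly (ZMod p) (F x) ∣ (X - 1 : (ZMod p)[X]) ^ (p ^ m) :=
    minpoly.dvd _ _ hann
  have hprime : Prime (X - (1 : (ZMod p)[X])) := by
    simpa using Polynomial.prime_X_sub_C (1 : ZMod p)
  obtain ⟨k, hk, hassoc⟩ := (dvd_prime_pow hprime _).mp hμdvd
  have hμeq : minpoly (ZMod p) (F x) = (X - 1 : (ZMod p)[X]) ^ k := by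
    refine Polynomial.eq_of_monic_of_associated (minpoly.monic (LinearMap.isIntegral _)) ?_ hassoc
    rw [← Polynomial.C_1]
    exact (Polynomial.monic_X_sub_C (1 : ZMod p)).pow k
  have hkm : k ≤ m := by
    have hd := LinearMap.minpoly_dvd_charpoly (F x)
    have hne : (F x).charpoly ≠ 0 := (LinearMap.charpoly_monic _).ne_zero
    have hle := Polynomial.natDegree_le_of_dvd hd hne
    rw [LinearMap.charpoly_natDegree, Module.finrank_fin_fun, hμeq, Polynomial.natDegree_pow] at hle
    have hXd : (X - (1 : (ZMod p)[X])).natDegree = 1 := by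
      simpa using Polynomial.natDegree_X_sub_C (1 : ZMod p)
    rw [hXd, mul_one] at hle
    exact hle
  -- geometric sum of F x vanishes
  have hgeom : (∑ i ∈ range p, (X : (ZMod p)[X]) ^ i) = (X - 1) ^ (p - 1) := by
    have hne : (X - 1 : (ZMod p)[X]) ≠ 0 := by
      rw [← Polynomial.C_1]
      exact Polynomial.X_sub_C_ne_zero (1 : ZMod p)
    refine mul_right_cancel₀ hne ?_
    rw [geom_sum_mul, ← pow_succ, Nat.sub_add_cancel hp.one_lt.le, sub_pow_char, one_pow]
  have hsum : (∑ i ∈ range p, (F x) ^ i) = 0 := by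
    have h1 : (∑ i ∈ range p, (F x) ^ i) = (Polynomial.aeval (F x)) ((X - 1 : (ZMod p)[X]) ^ (p - 1)) := by
      rw [← hgeom, map_sum]
      simp
    have h2 : ((X - 1 : (ZMod p)[X]) ^ (p - 1)) =
        minpoly (ZMod p) (F x) * (X - 1) ^ (p - 1 - k) := by
      rw [hμeq, ← pow_add]
      congr 1
      omega
    rw [h1, h2, map_mul, minpoly.aeval, zero_mul]
  -- telescoping formula for powers
  have htel : ∀ n : ℕ, x ^ n = ∑ i ∈ range n, (x ^ i * x - x ^ i) := by
    intro n
    induction n with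
    | zero => rw [pow_zero, range_zero, Finset.sum_empty, h01]
    | succ n ih =>
      rw [Finset.sum_range_succ, ← ih, pow_succ]
      abel
  -- conclude x ^ p = 1
  have hxp : x ^ p = 1 := by
    have he0 : e (x ^ p) = 0 := by
      rw [htel p, map_sum]
      have heach : ∀ i ∈ range p, e (x ^ i * x - x ^ i) = ((F x) ^ i) (e x) := by
        intro i _
        rw [hFpow, AddEquiv.symm_apply_apply]
      rw [Finset.sum_congr rfl heach, ← LinearMap.sum_apply, hsum, LinearMap.zero_apply]
    have := e.injective (by rw [he0, map_zero] : e (x ^ p) = e 0)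
    rw [this, h01]
  -- order
  have hd : orderOf x ∣ p := orderOf_dvd_of_pow_eq_one hxp
  rcases (Nat.dvd_prime hp).mp hd with h1 | h1
  · exact absurd (orderOf_eq_one_iff.mp h1) hx
  · exact h1
end

section
/- Let A = Z/(p^{α₁}) × ⋯ × Z/(p^{α_m}) with 1 ≤ α₁ ≤ ⋯ ≤ α_m. If M ∈ Aut(A) has order a power of p, then (M − Id)^m = p·N for some endomorphism N of A. -/
/-!
View `M` as a `ℤ`-linear endomorphism `f` of `A` with `f ^ p ^ k = 1`. For every `t` the torsion
subgroup `S = A[p ^ t]` is `f`-stable and generated by `m` elements, so `S ⧸ p S` is an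
`𝔽_p`-space of dimension at most `m` on which `f` induces `T` with `T ^ p ^ k = 1`. In
characteristic `p` this gives `(T - 1) ^ p ^ k = T ^ p ^ k - 1 = 0`, and a nilpotent operator in
dimension `≤ m` has `m`-th power zero; hence `(f - 1) ^ m` maps `A[p ^ t]` into `p • A[p ^ t]`.
For `t = α j` the basis vector `e j` is sent to `p • y j` with `p ^ α j • y j = 0`, so `e j ↦ y j`
extends to the endomorphism `N`.
-/

open Module Submodule Set
open scoped Pointwise

theorem sub_one_pow_prime_pow_eq_zero {R : Type*} [Ring R] {p k : ℕ} (hp : p.Prime)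
    (hpR : (p : R) = 0) {x : R} (hx : x ^ p ^ k = 1) : (x - 1) ^ p ^ k = 0 := by
  nontriviality R
  have : Fact p.Prime := ⟨hp⟩
  have : CharP R p := (CharP.charP_iff_prime_eq_zero hp).mpr hpR
  rw [sub_pow_char_pow_of_commute p k (Commute.one_right x), hx, one_pow, sub_self]

theorem Module.End.pow_eq_zero_of_isNilpotent_of_finrank_le {K V : Type*} [Field K]
    [AddCommGroup V] [Module K V] [FiniteDimensional K V] {N : Module.End K V}
    (hN : IsNilpotent N) {m : ℕ} (hm : finrank K V ≤ m) : N ^ m = 0 := by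
  have h := LinearMap.aeval_self_charpoly N
  rw [hN.charpoly_eq_X_pow_finrank, map_pow, Polynomial.aeval_X] at h
  exact pow_eq_zero_of_le hm h

theorem pow_card_eq_zero_of_isNilpotent_of_span_eq_top {p : ℕ} [Fact p.Prime] {V : Type*}
    [AddCommGroup V] [Module (ZMod p) V] {ι : Type*} [Fintype ι] {g : ι → V}
    (hg : span ℤ (range g) = ⊤) {N : Module.End ℤ V} (hN : IsNilpotent N) : N ^ Fintype.card ι = 0 := by
  let N' : Module.End (ZMod p) V := N.toAddMonoidHom.toZModLinearMap p
  have hpow (j : ℕ) : ⇑(N' ^ j) = ⇑(N ^ j) := by simp only [Module.End.coe_pow]; rfl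
  have hspan : span (ZMod p) (range g) = ⊤ := by
    rw [← restrictScalars_eq_top_iff ℤ, eq_top_iff, ← hg]
    exact span_le_restrictScalars ℤ (ZMod p) _
  have : FiniteDimensional (ZMod p) V := ⟨hspan ▸ fg_span (finite_range g)⟩
  have hfin : finrank (ZMod p) V ≤ Fintype.card ι := by
    have h := finrank_range_le_card (R := ZMod p) g
    rwa [Set.finrank, hspan, finrank_top] at h
  obtain ⟨j, hj⟩ := hN
  have hN' : IsNilpotent N' := ⟨j, DFunLike.coe_injective (by rw [hpow, hj]; rfl)⟩
  exact DFunLike.coe_injective <| by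
    rw [← hpow, Module.End.pow_eq_zero_of_isNilpotent_of_finrank_le hN' hfin]; rfl

theorem exists_sub_one_pow_apply_eq_nsmul {p k : ℕ} (hp : p.Prime) {S : Type*} [AddCommGroup S]
    {ι : Type*} [Fintype ι] {g : ι → S} (hg : span ℤ (range g) = ⊤) {f : Module.End ℤ S}
    (hf : f ^ p ^ k = 1) (x : S) : ∃ y, ((f - 1) ^ Fintype.card ι) x = p • y := by
  have : Fact p.Prime := ⟨hp⟩
  set P : Submodule ℤ S := (p : ℤ) • ⊤
  have hP (φ : Module.End ℤ S) : P ≤ P.comap φ := by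
    intro z hz
    obtain ⟨y, -, rfl⟩ := (mem_smul_pointwise_iff_exists _ _ _).mp hz
    simpa using smul_mem_pointwise_smul (φ y) (p : ℤ) ⊤ trivial
  have hV (v : S ⧸ P) : p • v = 0 := by
    rw [← natCast_zsmul]; exact Module.isTorsionBy_quotient_element_smul S (p : ℤ) (x := v)
  let _ : Module (ZMod p) (S ⧸ P) := AddCommGroup.zmodModule hV
  have hpV : ((p : ℕ) : Module.End ℤ (S ⧸ P)) = 0 := LinearMap.ext hV
  have hsub : P.mapQ P (f - 1) (hP _) = P.mapQ P f (hP f) - 1 := by ext; simp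
  have hunip : P.mapQ P f (hP f) ^ p ^ k = 1 := by rw [← mapQ_pow]; simp only [hf]; exact mapQ_id _
  have hgen : span ℤ (range (P.mkQ ∘ g)) = ⊤ := by
    rw [range_comp, span_image, hg, Submodule.map_top, range_mkQ]
  have hnil : IsNilpotent (P.mapQ P (f - 1) (hP _)) :=
    ⟨p ^ k, hsub ▸ sub_one_pow_prime_pow_eq_zero hp hpV hunip⟩
  have hzero := pow_card_eq_zero_of_isNilpotent_of_span_eq_top (p := p) hgen hnil
  have hmem : ((f - 1) ^ Fintype.card ι) x ∈ P := by
    rw [← Quotient.mk_eq_zero, ← mapQ_apply P P (h := hP _), mapQ_pow P (hP _), hzero]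
    rfl
  obtain ⟨y, -, hy⟩ := (mem_smul_pointwise_iff_exists _ _ _).mp hmem
  exact ⟨y, by rw [← hy, natCast_zsmul]⟩

theorem exists_mem_sub_one_pow_apply_eq_nsmul {p k : ℕ} (hp : p.Prime) {A : Type*}
    [AddCommGroup A] {f : Module.End ℤ A} (hf : f ^ p ^ k = 1) {S : Submodule ℤ A}
    (hfS : ∀ x ∈ S, f x ∈ S) {ι : Type*} [Fintype ι] {g : ι → A} (hS : S = span ℤ (range g))
    {x : A} (hx : x ∈ S) : ∃ y ∈ S, ((f - 1) ^ Fintype.card ι) x = p • y := by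
  let g' (i : ι) : S := ⟨g i, hS ▸ subset_span (mem_range_self i)⟩
  have hg' : span ℤ (range g') = ⊤ := by
    apply map_injective_of_injective S.injective_subtype
    rw [map_span, ← range_comp, Submodule.map_top, range_subtype]
    exact hS.symm
  have hres : f.restrict hfS ^ p ^ k = 1 := by
    ext y; simp [Module.End.pow_restrict, hf]
  have hsub : f.restrict hfS - 1 = (f - 1).restrict (fun y hy ↦ S.sub_mem (hfS y hy) hy) := by
    ext; simp
  obtain ⟨y, hy⟩ := exists_sub_one_pow_apply_eq_nsmul hp hg' hres ⟨x, hx⟩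
  refine ⟨y, y.2, ?_⟩
  rw [hsub, Module.End.pow_restrict] at hy
  exact congrArg Subtype.val hy

theorem Submodule.apply_mem_torsionBy {R M M' : Type*} [CommSemiring R] [AddCommMonoid M]
    [Module R M] [AddCommMonoid M'] [Module R M'] (f : M →ₗ[R] M') {a : R} {x : M}
    (hx : x ∈ torsionBy R M a) : f x ∈ torsionBy R M' a := by
  rw [mem_torsionBy_iff] at hx ⊢
  rw [← map_smul, hx, map_zero]

theorem ZMod.exists_eq_pow_sub_mul_of_pow_mul_eq_zero {p a t : ℕ} (hp : p ≠ 0)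
    {x : ZMod (p ^ a)} (hx : (p : ZMod (p ^ a)) ^ t * x = 0) : ∃ c, x = p ^ (a - t) * c := by
  have : NeZero (p ^ a) := ⟨pow_ne_zero a hp⟩
  rcases le_or_gt a t with hat | hta
  · exact ⟨x, by rw [Nat.sub_eq_zero_of_le hat, pow_zero, one_mul]⟩
  have hdvd : p ^ (a - t) * p ^ t ∣ x.val * p ^ t := by
    rw [← pow_add, Nat.sub_add_cancel hta.le, mul_comm, ← ZMod.natCast_eq_zero_iff]
    simpa using hx
  obtain ⟨c, hc⟩ := Nat.dvd_of_mul_dvd_mul_right (pow_pos (Nat.pos_of_ne_zero hp) t) hdvd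
  exact ⟨c, by rw [← ZMod.natCast_zmod_val x, hc]; push_cast; rfl⟩

theorem torsionBy_pi_zmod_pow_eq_span {ι : Type*} [Fintype ι] [DecidableEq ι] {p : ℕ}
    (hp : p ≠ 0) (α : ι → ℕ) (t : ℕ) :
    torsionBy ℤ (∀ i, ZMod (p ^ α i)) ((p : ℤ) ^ t) =
      span ℤ (range fun i ↦ p ^ (α i - t) • Pi.single i (1 : ZMod (p ^ α i))) := by
  apply le_antisymm
  · intro x hx
    rw [← Finset.univ_sum_single x]
    refine sum_mem fun i _ ↦ ?_
    have hxi : (p : ZMod (p ^ α i)) ^ t * x i = 0 := by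
      simpa using congrFun (mem_torsionBy_iff _ _ |>.mp hx) i
    obtain ⟨c, hc⟩ := ZMod.exists_eq_pow_sub_mul_of_pow_mul_eq_zero hp hxi
    have hxi_eq : Pi.single i (x i) =
        (c.cast : ℤ) • (p ^ (α i - t) • (Pi.single i 1 : ∀ j, ZMod (p ^ α j))) := by
      rw [hc, ← Pi.single_smul, ← Pi.single_smul]
      congr 1
      simp [mul_comm]
    rw [hxi_eq]
    exact smul_mem _ _ (subset_span (mem_range_self i))
  · rw [span_le]
    rintro _ ⟨i, rfl⟩
    rw [SetLike.mem_coe, mem_torsionBy_iff]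
    dsimp only
    rw [← Pi.single_smul, ← Pi.single_smul, ← Pi.single_zero i]
    congr 1
    have hdvd : p ^ α i ∣ p ^ t * p ^ (α i - t) := by
      rw [← pow_add]; exact pow_dvd_pow p le_add_tsub
    rw [← ZMod.natCast_eq_zero_iff] at hdvd
    simpa using hdvd

theorem exists_eq_nsmul_of_apply_single_one {ι : Type*} [Fintype ι] [DecidableEq ι]
    {n : ι → ℕ} {B : Type*} [AddCommGroup B] (ψ : (∀ i, ZMod (n i)) →+ B) (c : ℕ)
    (h : ∀ j, ∃ y : B, n j • y = 0 ∧ ψ (Pi.single j 1) = c • y) :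
    ∃ N : (∀ i, ZMod (n i)) →+ B, ψ = c • N := by
  choose y hy0 hy using h
  let N : (∀ i, ZMod (n i)) →+ B := ∑ i, (ZMod.lift (n i)
    ⟨zmultiplesHom B (y i), by simpa using hy0 i⟩).comp (Pi.evalAddMonoidHom _ i)
  have hN (j : ι) : N (Pi.single j 1) = y j := by
    rw [AddMonoidHom.finsetSum_apply, Finset.sum_eq_single_of_mem j (Finset.mem_univ j)
      fun i _ hij ↦ by simp [Pi.single_eq_of_ne hij], AddMonoidHom.comp_apply,
      Pi.evalAddMonoidHom_apply, Pi.single_eq_same, ← Int.cast_one, ZMod.lift_coe,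
      zmultiplesHom_apply, one_zsmul]
  refine ⟨N, AddMonoidHom.functions_ext _ _ _ fun j x ↦ ?_⟩
  obtain ⟨x, rfl⟩ := ZMod.intCast_surjective x
  rw [← zsmul_one, Pi.single_smul, map_zsmul, map_zsmul, hy, AddMonoidHom.smul_apply, hN]

theorem AddAut.coe_nsmul {A : Type*} [Add A] (M : AddAut A) (n : ℕ) : ⇑(n • M) = (⇑M)^[n] := by
  induction n with
  | zero => rfl
  | succ n ih => ext x; rw [succ_nsmul, add_apply, ih, Function.iterate_succ_apply]

theorem stmt7_general (p m : ℕ) (hp : p.Prime) (α : Fin m → ℕ)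
    (M : AddAut (∀ i : Fin m, ZMod (p ^ α i)))
    (k : ℕ) (hM : addOrderOf M = p ^ k) :
    ∃ N : AddMonoid.End (∀ i : Fin m, ZMod (p ^ α i)),
      ((show AddMonoid.End (∀ i : Fin m, ZMod (p ^ α i)) from M.toAddMonoidHom) - 1) ^ m
        = p • N := by
  set E : AddMonoid.End (∀ i : Fin m, ZMod (p ^ α i)) := M.toAddMonoidHom
  set f := addMonoidEndRingEquivInt _ E
  have hf : f ^ p ^ k = 1 := LinearMap.ext fun x ↦ by
    rw [Module.End.pow_apply, show ⇑f = ⇑M from rfl, ← AddAut.coe_nsmul, ← hM,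
      addOrderOf_nsmul_eq_zero]
    rfl
  have hcoe : ⇑((f - 1) ^ m) = ⇑((E - 1) ^ m) := by
    rw [← map_one (addMonoidEndRingEquivInt _), ← map_sub, ← map_pow]; rfl
  refine exists_eq_nsmul_of_apply_single_one _ p fun j ↦ ?_
  have hS := torsionBy_pi_zmod_pow_eq_span hp.ne_zero α (α j)
  have hsingle : (Pi.single j 1 : ∀ i, ZMod (p ^ α i)) ∈ torsionBy ℤ _ ((p : ℤ) ^ α j) := by
    rw [hS]
    exact subset_span ⟨j, by simp⟩
  obtain ⟨y, hy, hfy⟩ := exists_mem_sub_one_pow_apply_eq_nsmul hp hf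
    (fun _ ↦ apply_mem_torsionBy f) hS hsingle
  rw [Fintype.card_fin, hcoe] at hfy
  exact ⟨y, by exact_mod_cast (mem_torsionBy_iff _ _).mp hy, hfy⟩

/-- Let `A = Z/(p^{α₁}) × ⋯ × Z/(p^{α_m})` with `1 ≤ α₁ ≤ ⋯ ≤ α_m`. If
`M ∈ Aut(A)` has order a power of `p`, then `(M − Id)^m = p·N` for some endomorphism `N`
of `A` (the computation taking place in the endomorphism ring of `A`). -/
theorem stmt7 (p m : ℕ) (hp : p.Prime) (α : Fin m → ℕ)
    (hα1 : ∀ i, 1 ≤ α i) (hαmono : Monotone α)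
    (M : AddAut (∀ i : Fin m, ZMod (p ^ α i)))
    (k : ℕ) (hM : addOrderOf M = p ^ k) :
    ∃ N : AddMonoid.End (∀ i : Fin m, ZMod (p ^ α i)),
      ((show AddMonoid.End (∀ i : Fin m, ZMod (p ^ α i)) from M.toAddMonoidHom) - 1) ^ m
        = p • N :=
  stmt7_general p m hp α M k hM
end

section
/- Let B be a finite left brace of order p^n with n + 2 ≤ p. If the multiplicative group (B,·) is abelian, then (B,·) is isomorphic to (B,+). -/
/-!
An abelian left brace `B` is the same thing as a nonunital commutative ring with
`a ⋆ b = a * b - a - b` in which every element is quasiregular, the brace product being the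
circle operation `a + b + a ⋆ b`. In the unitization `1 + B` is then a group of units, so `B` lies
in the Jacobson radical, and Nakayama's lemma makes the powers `B ^ k` strictly decrease until they
vanish; counting orders in a group of order `p ^ n` gives `B ^ (n + 1) = 0`. Since `n < p`, the
factorials up to `n!` are invertible modulo `p ^ n`, and `x ↦ ∑_{1 ≤ m ≤ n} x ^ m / m!` (the
truncated exponential minus one) is an injective map turning addition into the circle operation.
-/

open Finset
open scoped Nat

theorem AddSubgroup.card_mul_prime_dvd_of_lt {G : Type*} [AddGroup G] {p m : ℕ} (hp : p.Prime)
    {H K : AddSubgroup G} (hHK : H < K) (hK : Nat.card K ∣ p ^ m) :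
    Nat.card H * p ∣ Nat.card K := by
  have : Finite K := Nat.finite_of_card_ne_zero fun h => by
    simp [h, hp.ne_zero] at hK
  obtain ⟨a, -, ha⟩ := (Nat.dvd_prime_pow hp).1 hK
  obtain ⟨b, -, hb⟩ := (Nat.dvd_prime_pow hp).1 ((card_dvd_of_le hHK.le).trans hK)
  have hba : b < a := by
    by_contra! hab
    refine hHK.ne (eq_of_le_of_card_ge hHK.le ?_)
    rw [ha, hb]
    exact Nat.pow_le_pow_right hp.pos hab
  rw [ha, hb, ← pow_succ]
  exact pow_dvd_pow p hba

theorem AddSubgroup.eq_bot_of_antitone_of_card_eq_prime_pow {G : Type*} [AddGroup G] {p n : ℕ}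
    (hp : p.Prime) {N : ℕ → AddSubgroup G} (hN : Antitone N) (hcard : Nat.card (N 0) = p ^ n)
    (hstab : ∀ k, N k = N (k + 1) → N k = ⊥) : N n = ⊥ := by
  have key : ∀ k, N k ≠ ⊥ → Nat.card (N k) * p ^ k ∣ p ^ n := by
    intro k
    induction k with
    | zero => simp [hcard]
    | succ k ih =>
      intro hk
      have hne : N k ≠ ⊥ := fun h => hk (le_bot_iff.1 (h ▸ hN k.le_succ))
      have hlt : N (k + 1) < N k :=
        lt_of_le_of_ne (hN k.le_succ) fun h => hk (h ▸ hstab k h.symm)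
      have hdvd := ih hne
      calc Nat.card (N (k + 1)) * p ^ (k + 1) = Nat.card (N (k + 1)) * p * p ^ k := by ring
        _ ∣ Nat.card (N k) * p ^ k :=
          mul_dvd_mul_right (card_mul_prime_dvd_of_lt hp hlt (dvd_of_mul_right_dvd hdvd)) _
        _ ∣ p ^ n := hdvd
  by_contra h
  have hone : Nat.card (N n) ∣ 1 :=
    Nat.dvd_of_mul_dvd_mul_right (pow_pos hp.pos n) (by rw [one_mul]; exact key n h)
  exact h (eq_bot_of_card_eq _ (Nat.dvd_one.1 hone))

theorem Ideal.pow_succ_eq_bot_of_card_eq_prime_pow {R : Type*} [CommRing R] {I : Ideal R}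
    {p n : ℕ} (hp : p.Prime) (hfg : I.FG) (hjac : I ≤ Ideal.jacobson ⊥)
    (hcard : Nat.card I = p ^ n) : I ^ (n + 1) = ⊥ := by
  have htoAdd : ∀ J : Ideal R, J.toAddSubgroup = ⊥ ↔ J = ⊥ := fun J => by
    rw [← Submodule.bot_toAddSubgroup (R := R), Submodule.toAddSubgroup_inj]
  refine (htoAdd _).1 (AddSubgroup.eq_bot_of_antitone_of_card_eq_prime_pow hp
    (N := fun k => (I ^ (k + 1)).toAddSubgroup)
    (fun k l hkl => Ideal.pow_le_pow_right (by omega)) (by simpa using hcard) fun k h => ?_)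
  rw [htoAdd]
  refine Submodule.eq_bot_of_le_smul_of_le_jacobson_bot I _ hfg.pow ?_ hjac
  rw [Ideal.smul_eq_mul, ← pow_succ', (Submodule.toAddSubgroup_inj _ _).1 h]

theorem Finset.sum_range_sum_antidiagonal_eq_sum_product {M : Type*} [AddCommMonoid M] (n : ℕ)
    (f : ℕ × ℕ → M) (hf : ∀ q : ℕ × ℕ, n < q.1 + q.2 → f q = 0) :
    ∑ m ∈ range (n + 1), ∑ q ∈ antidiagonal m, f q = ∑ q ∈ range (n + 1) ×ˢ range (n + 1), f q := by
  rw [← sum_filter_of_ne (p := fun q : ℕ × ℕ => q.1 + q.2 ≤ n) fun q _ hq => by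
    by_contra h; exact hq (hf q (by omega))]
  rw [← sum_fiberwise_of_maps_to (g := fun q : ℕ × ℕ => q.1 + q.2) (t := range (n + 1))
    fun q hq => by simp only [mem_filter] at hq; simpa [Nat.lt_succ_iff] using hq.2]
  refine sum_congr rfl fun m hm => sum_congr ?_ fun _ _ => rfl
  ext ⟨i, k⟩
  simp only [mem_range] at hm
  simp only [HasAntidiagonal.mem_antidiagonal, mem_filter, mem_product, mem_range]
  omega

section TruncExp

variable {R : Type*} [CommRing R] {I : Ideal R} {n : ℕ}

/-- `∑_{m ≤ n} x ^ m / m!`, read correctly only when `n !` is a unit: `Ring.inverse` is `0` on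
non-units. -/
noncomputable def truncExp (n : ℕ) (x : R) : R :=
  ∑ m ∈ range (n + 1), Ring.inverse (m ! : R) * x ^ m

theorem truncExp_zero : truncExp n (0 : R) = 1 := by
  rw [truncExp, sum_range_succ']
  simp

theorem truncExp_sub_one_mem {x : R} (hx : x ∈ I) : truncExp n x - 1 ∈ I := by
  rw [truncExp, sum_range_succ']
  simp only [pow_zero, Nat.factorial_zero, Nat.cast_one, Ring.inverse_one, mul_one,
    add_sub_cancel_right]
  exact I.sum_mem fun m _ => I.mul_mem_left _ (I.pow_mem_of_mem hx _ m.succ_pos)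

theorem mul_pow_eq_zero_of_pow_eq_bot (hI : I ^ (n + 1) = ⊥) {x y : R} (hx : x ∈ I) (hy : y ∈ I)
    {i k : ℕ} (hik : n < i + k) : x ^ i * y ^ k = 0 := by
  rw [← Ideal.mem_bot, ← hI]
  refine Ideal.pow_le_pow_right hik ?_
  rw [pow_add]
  exact Ideal.mul_mem_mul (Ideal.pow_mem_pow hx i) (Ideal.pow_mem_pow hy k)

open DividedPowers.OfInvertibleFactorial in
theorem truncExp_add (hfac : IsUnit (n ! : R)) (hI : I ^ (n + 1) = ⊥) {x y : R} (hx : x ∈ I)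
    (hy : y ∈ I) : truncExp n (x + y) = truncExp n x * truncExp n y := by
  classical
  have hdpow : ∀ {z : R}, z ∈ I → truncExp n z = ∑ m ∈ range (n + 1), dpow I m z :=
    fun hz => sum_congr rfl fun m _ => (dpow_eq_of_mem hz).symm
  rw [hdpow (I.add_mem hx hy), hdpow hx, hdpow hy, sum_mul_sum, ← sum_product']
  simp_rw [dpow_add (n := n + 1) (by simpa using hfac) hI hx hy]
  refine sum_range_sum_antidiagonal_eq_sum_product n _ fun q hq => ?_
  rw [dpow_eq_of_mem hx, dpow_eq_of_mem hy, mul_mul_mul_comm,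
    mul_pow_eq_zero_of_pow_eq_bot hI hx hy hq, mul_zero]

theorem eq_zero_of_truncExp_eq_one (hI : I ^ (n + 1) = ⊥) {z : R} (hz : z ∈ I)
    (h : truncExp n z = 1) : z = 0 := by
  obtain _ | k := n
  · rw [zero_add, pow_one] at hI
    rwa [hI, Ideal.mem_bot] at hz
  set w := ∑ m ∈ range k, Ring.inverse ((m + 2)! : R) * z ^ m
  have hexp : truncExp (k + 1) z = 1 + z * (1 + z * w) := by
    have hsum : ∑ m ∈ range k, Ring.inverse ((m + 1 + 1)! : R) * z ^ (m + 1 + 1) = z * (z * w) := by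
      simp only [w, mul_sum]
      exact sum_congr rfl fun m _ => by ring
    rw [truncExp, sum_range_succ', sum_range_succ', hsum]
    simp only [zero_add, Nat.factorial_one, Nat.factorial_zero, Nat.cast_one, Ring.inverse_one,
      pow_zero, pow_one, one_mul, mul_one]
    ring
  have hunit : IsUnit (1 + z * w) := IsNilpotent.isUnit_one_add
    ⟨k + 2, by rw [← Ideal.mem_bot, ← hI]; exact Ideal.pow_mem_pow (I.mul_mem_right w hz) _⟩
  rw [hexp, add_eq_left] at h
  exact hunit.mul_left_eq_zero.1 h

theorem truncExp_injOn (hfac : IsUnit (n ! : R)) (hI : I ^ (n + 1) = ⊥) :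
    Set.InjOn (truncExp n) (I : Set R) := by
  intro x hx y hy hxy
  have hy' : -y ∈ I := I.neg_mem hy
  refine sub_eq_zero.1 (eq_zero_of_truncExp_eq_one hI (I.sub_mem hx hy) ?_)
  calc truncExp n (x - y) = truncExp n x * truncExp n (-y) := by
        rw [sub_eq_add_neg, truncExp_add hfac hI hx hy']
    _ = truncExp n (y + -y) := by rw [hxy, truncExp_add hfac hI hy hy']
    _ = 1 := by rw [add_neg_cancel, truncExp_zero]

end TruncExp

theorem ZMod.isScalarTower_self {N : ℕ} {A : Type*} [NonUnitalRing A] [Module (ZMod N) A] :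
    IsScalarTower (ZMod N) A A := ⟨fun r a b => by
  obtain ⟨k, rfl⟩ := ZMod.intCast_surjective r
  simp only [smul_eq_mul, Int.cast_smul_eq_zsmul, smul_mul_assoc]⟩

theorem ZMod.smulCommClass_self {N : ℕ} {A : Type*} [NonUnitalRing A] [Module (ZMod N) A] :
    SMulCommClass (ZMod N) A A := ⟨fun r a b => by
  obtain ⟨k, rfl⟩ := ZMod.intCast_surjective r
  simp only [smul_eq_mul, Int.cast_smul_eq_zsmul, mul_smul_comm]⟩

namespace Unitization

variable {S A : Type*} [CommRing S] [NonUnitalCommRing A] [Module S A] [IsScalarTower S A A]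
  [SMulCommClass S A A]

theorem mem_ker_fstHom {x : Unitization S A} :
    x ∈ RingHom.ker (fstHom S A) ↔ (x.snd : Unitization S A) = x := by
  rw [RingHom.mem_ker, fstHom_apply]
  constructor
  · intro h
    ext <;> simp [h]
  · intro h
    rw [← h, fst_inr]

theorem inr_mem_ker_fstHom (a : A) : (a : Unitization S A) ∈ RingHom.ker (fstHom S A) := by
  simp [RingHom.mem_ker]

theorem card_ker_fstHom : Nat.card (RingHom.ker (fstHom S A)) = Nat.card A := by
  have hrange : (RingHom.ker (fstHom S A) : Set (Unitization S A)) =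
      Set.range ((↑) : A → Unitization S A) := by
    ext x
    exact ⟨fun hx => ⟨x.snd, mem_ker_fstHom.1 hx⟩, by rintro ⟨a, rfl⟩; exact inr_mem_ker_fstHom a⟩
  exact (Nat.card_congr (Equiv.setCongr hrange)).trans (Nat.card_range_of_injective inr_injective)

theorem ker_fstHom_le_jacobson (hqr : ∀ a : A, IsQuasiregular a) :
    RingHom.ker (fstHom S A) ≤ Ideal.jacobson ⊥ := fun x hx => by
  refine Ideal.mem_jacobson_bot.2 fun y => ?_
  rw [← mem_ker_fstHom.1 ((RingHom.ker (fstHom S A)).mul_mem_right y hx), add_comm]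
  exact (isQuasiregular_iff_isUnit' S).1 (hqr _)

end Unitization

theorem NonUnitalCommRing.exists_equiv_map_add_eq_add_add_mul {A : Type*} [NonUnitalCommRing A]
    {p n : ℕ} (hp : p.Prime) (hn : n < p) (hcard : Nat.card A = p ^ n)
    (hqr : ∀ a : A, IsQuasiregular a) :
    ∃ f : A ≃ A, ∀ x y, f (x + y) = f x + f y + f x * f y := by
  have : Finite A := Nat.finite_of_card_ne_zero (by simp [hcard, hp.ne_zero])
  -- Unitize over `ZMod (p ^ n)` rather than `ℤ`, so that `n !` becomes a unit.
  let : Module (ZMod (p ^ n)) A := AddCommGroup.zmodModule fun a => hcard ▸ card_nsmul_eq_zero'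
  have := ZMod.isScalarTower_self (N := p ^ n) (A := A)
  have := ZMod.smulCommClass_self (N := p ^ n) (A := A)
  set I := RingHom.ker (Unitization.fstHom (ZMod (p ^ n)) A)
  have hmem : ∀ a : A, (a : Unitization (ZMod (p ^ n)) A) ∈ I := Unitization.inr_mem_ker_fstHom
  have hcardI : Nat.card I = p ^ n := Unitization.card_ker_fstHom.trans hcard
  have : Finite I := Nat.finite_of_card_ne_zero (by simp [hcardI, hp.ne_zero])
  have hI : I ^ (n + 1) = ⊥ := Ideal.pow_succ_eq_bot_of_card_eq_prime_pow hp
    (Submodule.FG.of_finite) (Unitization.ker_fstHom_le_jacobson hqr) hcardI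
  have hfac : IsUnit (n ! : Unitization (ZMod (p ^ n)) A) := by
    have hcop : (n !).Coprime (p ^ n) := Nat.Coprime.pow_right _
      (hp.coprime_iff_not_dvd.2 (by rw [hp.dvd_factorial]; omega)).symm
    simpa using ((ZMod.isUnit_iff_coprime _ _).2 hcop).map
      (Unitization.inlRingHom (ZMod (p ^ n)) A)
  let f : A → A := fun a => (truncExp n (a : Unitization (ZMod (p ^ n)) A) - 1).snd
  have hf : ∀ a, (f a : Unitization (ZMod (p ^ n)) A) = truncExp n (a : Unitization _ A) - 1 :=
    fun a => Unitization.mem_ker_fstHom.1 (truncExp_sub_one_mem (n := n) (hmem a))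
  have hadd : ∀ x y, f (x + y) = f x + f y + f x * f y := fun x y =>
    Unitization.inr_injective (R := ZMod (p ^ n)) <| by
      rw [Unitization.inr_add, Unitization.inr_add, Unitization.inr_mul, hf, hf, hf,
        Unitization.inr_add, truncExp_add hfac hI (hmem x) (hmem y)]
      ring
  have hinj : Function.Injective f := fun x y hxy => Unitization.inr_injective
    (truncExp_injOn hfac hI (hmem x) (hmem y)
      (by simpa [hf] using congrArg ((↑) : A → Unitization (ZMod (p ^ n)) A) hxy))
  exact ⟨Equiv.ofBijective f (Finite.injective_iff_bijective.1 hinj), hadd⟩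

section Brace

variable {B : Type*} [AddCommGroup B] [Group B]

theorem one_eq_zero_of_brace (brace : ∀ a b c : B, a * (b + c) + a = a * b + a * c) :
    (1 : B) = 0 := by
  simpa using brace 1 0 0

theorem mul_add_sub_of_brace (brace : ∀ a b c : B, a * (b + c) + a = a * b + a * c)
    (a b c : B) : a * (b + c) - a - (b + c) = (a * b - a - b) + (a * c - a - c) := by
  rw [eq_sub_of_add_eq (brace a b c)]
  abel

theorem add_mul_sub_of_brace (brace : ∀ a b c : B, a * (b + c) + a = a * b + a * c)
    (hcomm : ∀ a b : B, a * b = b * a) (a b c : B) :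
    (a + b) * c - (a + b) - c = (a * c - a - c) + (b * c - b - c) := by
  rw [hcomm _ c, hcomm a, hcomm b]
  linear_combination (norm := module) mul_add_sub_of_brace brace c a b

theorem mul_sub_assoc_of_brace (brace : ∀ a b c : B, a * (b + c) + a = a * b + a * c)
    (hcomm : ∀ a b : B, a * b = b * a) (a b c : B) :
    (a * b - a - b) * c - (a * b - a - b) - c = a * (b * c - b - c) - a - (b * c - b - c) := by
  have E1 := add_mul_sub_of_brace brace hcomm (a * b - a - b + a) b c
  have E2 := add_mul_sub_of_brace brace hcomm (a * b - a - b) a c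
  have E3 := mul_add_sub_of_brace brace a (b * c - b - c + b) c
  have E4 := mul_add_sub_of_brace brace a (b * c - b - c) b
  rw [show a * b - a - b + a + b = a * b by abel, mul_assoc] at E1
  rw [show b * c - b - c + b + c = b * c by abel] at E3
  linear_combination (norm := module) E3 + E4 - E1 - E2

abbrev braceRing (brace : ∀ a b c : B, a * (b + c) + a = a * b + a * c)
    (hcomm : ∀ a b : B, a * b = b * a) : NonUnitalCommRing B :=
  { (inferInstance : AddCommGroup B) with
    mul := fun a b => a * b - a - b
    left_distrib := mul_add_sub_of_brace brace
    right_distrib := add_mul_sub_of_brace brace hcomm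
    zero_mul := fun b => by
      change 0 * b - 0 - b = 0
      rw [sub_zero, sub_eq_zero, ← one_eq_zero_of_brace brace, one_mul]
    mul_zero := fun a => by
      change a * 0 - a - 0 = 0
      rw [sub_zero, sub_eq_zero, ← one_eq_zero_of_brace brace, mul_one]
    mul_assoc := mul_sub_assoc_of_brace brace hcomm
    mul_comm := fun a b => by
      change a * b - a - b = b * a - b - a
      rw [hcomm a b, sub_right_comm] }

theorem isQuasiregular_braceRing (brace : ∀ a b c : B, a * (b + c) + a = a * b + a * c)
    (hcomm : ∀ a b : B, a * b = b * a) (a : B) :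
    @IsQuasiregular B (braceRing brace hcomm).toNonUnitalSemiring a :=
  (@isQuasiregular_iff B (braceRing brace hcomm).toNonUnitalSemiring a).2 ⟨a⁻¹, by
    show a⁻¹ + a + (a * a⁻¹ - a - a⁻¹) = 0
    rw [mul_inv_cancel, one_eq_zero_of_brace brace]
    abel, by
    show a + a⁻¹ + (a⁻¹ * a - a⁻¹ - a) = 0
    rw [inv_mul_cancel, one_eq_zero_of_brace brace]
    abel⟩

end Brace

/-- Let `B` be a finite left brace of order `p^n` with `n + 2 ≤ p`. If the
multiplicative group `(B,·)` is abelian, then `(B,·) ≅ (B,+)`. -/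
theorem stmt10 (p n : ℕ) (hp : p.Prime) (hn : n + 2 ≤ p)
    (B : Type*) [AddCommGroup B] [Group B] [Fintype B]
    (brace : ∀ a b c : B, a * (b + c) + a = a * b + a * c)
    (hcard : Fintype.card B = p ^ n)
    (hcomm : ∀ a b : B, a * b = b * a) :
    Nonempty (B ≃* Multiplicative B) := by
  obtain ⟨f, hf⟩ := @NonUnitalCommRing.exists_equiv_map_add_eq_add_add_mul B
    (braceRing brace hcomm) p n hp (by omega) (by rw [Nat.card_eq_fintype_card, hcard])
    (isQuasiregular_braceRing brace hcomm)
  have hmul : ∀ x y : B, f (x + y) = f x * f y := fun x y => (hf x y).trans <| by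
    show f x + f y + (f x * f y - f x - f y) = f x * f y
    abel
  exact ⟨(MulEquiv.mk' (Multiplicative.toAdd.trans f) fun u v => hmul u.toAdd v.toAdd).symm⟩
end

section
/- In a left brace B, for any a ∈ B, a^p = pa + Σ_{i=2}^{p−1} C(p,i)(λ_a − Id)^{i−1}(a) + (λ_a − Id)^{p−1}(a), where the operators act on the additive group and pa denotes the p-fold additive sum. -/
/-!
Writing `λ_a(x) = a·x − a`, the identity `a·x = λ_a(x) + a` gives by induction
`aⁿ = (1 + λ_a + ⋯ + λ_a^{n−1})(a)`, using `1 = 0` (which is `λ_1(0) = 0`).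
Expanding `λ_a^k = (D + 1)^k` with `D = λ_a − 1` and summing over `k < n` by Pascal's rule gives
`aⁿ = Σ_{m<n} C(n, m+1) D^m(a)`; for `n = p ≥ 2` the terms `m = 0` and `m = p − 1` are `p·a`
and `D^{p−1}(a)`.
-/

open Finset

theorem sum_range_add_one_pow {R : Type*} [Semiring R] (x : R) (n : ℕ) :
    ∑ k ∈ range n, (x + 1) ^ k = ∑ m ∈ range n, n.choose (m + 1) • x ^ m := by
  induction n with
  | zero => simp
  | succ n ih =>
    have binomial : (x + 1) ^ n = ∑ m ∈ range (n + 1), n.choose m • x ^ m := by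
      simp only [(Commute.one_right x).add_pow, one_pow, mul_one, nsmul_eq_mul,
        (Nat.cast_commute _ _).eq]
    rw [sum_range_succ, ih, binomial, ← add_zero (∑ m ∈ range n, _), ← zero_smul ℕ (x ^ n),
      ← Nat.choose_succ_self n, ← sum_range_succ (fun m => n.choose (m + 1) • x ^ m),
      ← sum_add_distrib]
    refine sum_congr rfl fun m _ => ?_
    rw [Nat.choose_succ_succ', add_smul, add_comm]

theorem pow_eq_sum_pow_apply {B : Type*} [AddCommMonoid B] [Monoid B] (hB : (1 : B) = 0)
    (L : AddMonoid.End B) (a : B) (hmul : ∀ x, a * x = L x + a) (n : ℕ) :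
    a ^ n = (∑ k ∈ range n, L ^ k) a := by
  induction n with
  | zero => simpa using hB
  | succ n ih =>
    rw [pow_succ', ih, hmul, sum_range_succ', pow_zero]
    simp only [pow_succ', ← mul_sum]
    rfl

theorem sum_range_choose_succ_nsmul {M : Type*} [AddCommMonoid M] (f : ℕ → M) {n : ℕ}
    (hn : 2 ≤ n) :
    ∑ m ∈ range n, n.choose (m + 1) • f m =
      n • f 0 + ∑ i ∈ Icc 2 (n - 1), n.choose i • f (i - 1) + f (n - 1) := by
  obtain ⟨n, rfl⟩ : ∃ k, n = k + 2 := ⟨n - 2, by omega⟩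
  rw [sum_range_succ, sum_range_succ', show n + 2 - 1 = n + 1 by omega,
    ← Ico_add_one_right_eq_Icc, sum_Ico_eq_sum_range]
  simp [add_comm 2, add_comm _ (_ • f 0)]

theorem stmt12_general (B : Type*) [AddCommGroup B] [Group B]
    (lam : B →* Multiplicative (AddAut B)) (hlam : ∀ g h : B, Multiplicative.toAdd (lam g) h = g * h - g)
    (p : ℕ) (hp : p.Prime) (a : B) :
    a ^ p = p • a +
      (∑ i ∈ Finset.Icc 2 (p - 1), Nat.choose p i •
        (((show AddMonoid.End B from (Multiplicative.toAdd (lam a)).toAddMonoidHom) - 1) ^ (i - 1)) a) +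
      (((show AddMonoid.End B from (Multiplicative.toAdd (lam a)).toAddMonoidHom) - 1) ^ (p - 1)) a := by
  dsimp only
  set L : AddMonoid.End B := (Multiplicative.toAdd (lam a)).toAddMonoidHom
  set D := L - 1
  have one_eq_zero : (1 : B) = 0 := by
    simpa [sub_eq_zero, eq_comm] using hlam 1 0
  have mul_eq : ∀ x, a * x = L x + a := fun x => by
    rw [show L x = a * x - a from hlam a x, sub_add_cancel]
  have hL : L = D + 1 := (sub_add_cancel L 1).symm
  rw [pow_eq_sum_pow_apply one_eq_zero L a mul_eq, hL, sum_range_add_one_pow]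
  exact (AddMonoidHom.finsetSum_apply _ _ a).trans
    (sum_range_choose_succ_nsmul (fun m => (D ^ m) a) hp.two_le)

/-- In a left brace `B`, for any `a ∈ B` and any prime `p`,
`a^p = p·a + Σ_{i=2}^{p−1} C(p,i)·(λ_a − Id)^{i−1}(a) + (λ_a − Id)^{p−1}(a)`,
where the operators act on the additive group and `p·a` is the `p`-fold additive sum. -/
theorem stmt12 (B : Type*) [AddCommGroup B] [Group B]
    (brace : ∀ a b c : B, a * (b + c) + a = a * b + a * c)
    (lam : B →* Multiplicative (AddAut B)) (hlam : ∀ g h : B, Multiplicative.toAdd (lam g) h = g * h - g)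
    (p : ℕ) (hp : p.Prime) (a : B) :
    a ^ p = p • a +
      (∑ i ∈ Finset.Icc 2 (p - 1), Nat.choose p i •
        (((show AddMonoid.End B from (Multiplicative.toAdd (lam a)).toAddMonoidHom) - 1) ^ (i - 1)) a) +
      (((show AddMonoid.End B from (Multiplicative.toAdd (lam a)).toAddMonoidHom) - 1) ^ (p - 1)) a :=
  stmt12_general B lam hlam p hp a
end
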